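/- In the allegory A_P of relations of an elementary existential doctrine P (objects those of C, hom-posets A_P(A,B) = P(A×B), composition by ∃ along the middle projection, identities δ_A), composition is associative and δ_A is a two-sided unit, and the opposite operation θ ↦ P_{⟨p2,p1⟩}(θ) is an involution satisfying (ψ∘θ)° = θ°∘ψ°. -/

import Mathlib

open CategoryTheory CategoryTheory.Limits

universe u v w

/-- Layer 0: an indexed family of inf-semilattices over a category. -/
structure DocL0 (C : Type u) [Category.{v} C] where
  obj : C → Type w
  semi : ∀ A : C, SemilatticeInf (obj A)

attribute [instance] DocL0.semi

/-- Layer 1: fibrewise top elements. -/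
structure DocL1 (C : Type u) [Category.{v} C] extends DocL0.{u, v, w} C where
  otop : ∀ A : C, OrderTop (obj A)

attribute [instance] DocL1.otop

/-- A doctrine: an indexed inf-semilattice `P : Cᵒᵖ → InfSL`. -/
structure Doctrine (C : Type u) [Category.{v} C] extends DocL1.{u, v, w} C where
  map : ∀ {A B : C}, (A ⟶ B) → obj B → obj A
  map_id : ∀ (A : C) (x : obj A), map (𝟙 A) x = x
  map_comp : ∀ {A B D : C} (f : A ⟶ B) (g : B ⟶ D) (x : obj D),
    map (f ≫ g) x = map f (map g x)
  map_mono : ∀ {A B : C} (f : A ⟶ B), Monotone (map f)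
  map_inf : ∀ {A B : C} (f : A ⟶ B) (x y : obj B),
    map f (x ⊓ y) = map f x ⊓ map f y
  map_top : ∀ {A B : C} (f : A ⟶ B), map f (⊤ : obj B) = (⊤ : obj A)

/-- An elementary existential doctrine. -/
structure EED (C : Type u) [Category.{v} C] [HasBinaryProducts C] extends
    Doctrine.{u, v, w} C where
  delta : ∀ A : C, obj (A ⨯ A)
  elem_i : ∀ {A : C} (α : obj A) (β : obj (A ⨯ A)),
    map prod.fst α ⊓ delta A ≤ β ↔ α ≤ map (diag A) β
  elem_ii : ∀ {X A : C} (α : obj (X ⨯ A)) (β : obj ((X ⨯ A) ⨯ A)),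
    map prod.fst α ⊓ map (prod.lift (prod.fst ≫ prod.snd) prod.snd) (delta A) ≤ β ↔
      α ≤ map (prod.lift (𝟙 (X ⨯ A)) prod.snd) β
  ex : ∀ {A B : C}, (A ⟶ B) → obj A → obj B
  ex_adj : ∀ {A B : C} (f : A ⟶ B) (α : obj A) (β : obj B),
    ex f α ≤ β ↔ α ≤ map f β
  frobenius : ∀ {A B : C} (f : A ⟶ B) (α : obj B) (β : obj A),
    ex f (map f α ⊓ β) = α ⊓ ex f β
  beck_chevalley : ∀ {A A' B : C} (f : A' ⟶ A) (β : obj (A ⨯ B)),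
    ex prod.fst (map (prod.map f (𝟙 B)) β) = map f (ex prod.fst β)

namespace EED

variable {C : Type u} [Category.{v} C] [HasBinaryProducts C] (P : EED.{u, v, w} C)

/-- Relational composition `∃_{p₂}(P_{⟨p₁,p₂⟩}(θ) ∧ P_{⟨p₂,p₃⟩}(ζ))`. -/
noncomputable def comp {A B D : C} (θ : P.obj (A ⨯ B)) (ζ : P.obj (B ⨯ D)) : P.obj (A ⨯ D) :=
  P.ex (prod.lift (prod.fst ≫ prod.fst) prod.snd)
    (P.map prod.fst θ ⊓ P.map (prod.lift (prod.fst ≫ prod.snd) prod.snd) ζ)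

/-- Opposite relation `P_{⟨p₂,p₁⟩}(θ)`. -/
noncomputable def op {A B : C} (θ : P.obj (A ⨯ B)) : P.obj (B ⨯ A) :=
  P.map (prod.lift prod.snd prod.fst) θ

/-- `ρ ≤ P_{⟨p₂,p₁⟩}(ρ)`. -/
def SymmRel {A : C} (ρ : P.obj (A ⨯ A)) : Prop :=
  ρ ≤ P.map (prod.lift prod.snd prod.fst) ρ

/-- `P_{⟨p₁,p₂⟩}(ρ) ∧ P_{⟨p₂,p₃⟩}(ρ) ≤ P_{⟨p₁,p₃⟩}(ρ)` in `P((A×A)×A)`. -/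
def TransRel {A : C} (ρ : P.obj (A ⨯ A)) : Prop :=
  P.map prod.fst ρ ⊓ P.map (prod.lift (prod.fst ≫ prod.snd) prod.snd) ρ ≤
    P.map (prod.lift (prod.fst ≫ prod.fst) prod.snd) ρ

/-- `δ_A ≤ ρ`. -/
def ReflRel {A : C} (ρ : P.obj (A ⨯ A)) : Prop := P.delta A ≤ ρ

/-- A `P`-equivalence relation. -/
def EqRel {A : C} (ρ : P.obj (A ⨯ A)) : Prop :=
  P.ReflRel ρ ∧ P.SymmRel ρ ∧ P.TransRel ρ

/-- Conditions (i)–(v) for an arrow `φ : ⟨A,ρ⟩ → ⟨B,σ⟩` of the exact completion `T_P`. -/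
def IsArrow {A B : C} (ρ : P.obj (A ⨯ A)) (σ : P.obj (B ⨯ B)) (φ : P.obj (A ⨯ B)) : Prop :=
  (φ ≤ P.map (prod.lift prod.fst prod.fst) ρ ⊓ P.map (prod.lift prod.snd prod.snd) σ) ∧
  (P.map prod.fst ρ ⊓ P.map (prod.lift (prod.fst ≫ prod.snd) prod.snd) φ ≤
      P.map (prod.lift (prod.fst ≫ prod.fst) prod.snd) φ) ∧
  (P.map prod.fst φ ⊓ P.map (prod.lift (prod.fst ≫ prod.snd) prod.snd) σ ≤
      P.map (prod.lift (prod.fst ≫ prod.fst) prod.snd) φ) ∧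
  (P.map prod.fst φ ⊓ P.map (prod.lift (prod.fst ≫ prod.fst) prod.snd) φ ≤
      P.map (prod.lift (prod.fst ≫ prod.snd) prod.snd) σ) ∧
  (P.map (diag A) ρ ≤ P.ex prod.fst φ)

/-- The graph relation `L[f] = ∃_{p₂}(P_{⟨p₁,p₂⟩}(ρ) ∧ P_{⟨f∘p₂,p₃⟩}(σ))` in `P(A×B)`. -/
noncomputable def Lrel {A B : C} (f : A ⟶ B) (ρ : P.obj (A ⨯ A)) (σ : P.obj (B ⨯ B)) : P.obj (A ⨯ B) :=
  P.ex (prod.lift (prod.fst ≫ prod.fst) prod.snd)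
    (P.map prod.fst ρ ⊓ P.map (prod.lift (prod.fst ≫ prod.snd ≫ f) prod.snd) σ)

end EED

/-! Both sides of associativity are the existential image of `θ(a,b) ∧ ζ(b,d) ∧ ξ(d,e)` along
`(a,b,d,e) ↦ (a,e)`: Beck–Chevalley pulls the inner quantifier out of the reindexing, and
Frobenius moves the remaining conjunct under it. Condition `elem_ii` says precisely that
`θ(a,b) ∧ δ(b,b')` is the existential image of `θ` along `⟨1, p₂⟩`, which gives the right unit law.
The opposite operation is reindexing along an involution, hence also `∃` along it, so it commutes
with composition up to a permutation of variables; `δ` is symmetric by `elem_i`, and the left unit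
law is the right one seen through the opposite. -/

-- `limit.lift_π` does not fire on goals stated with `prod.lift`.
attribute [local simp] prod.lift_fst prod.lift_snd prod.lift_fst_assoc prod.lift_snd_assoc

noncomputable def prodRightComm {C : Type u} [Category.{v} C] [HasBinaryProducts C] (X Y Z : C) :
    (X ⨯ Y) ⨯ Z ≅ (X ⨯ Z) ⨯ Y where
  hom := prod.lift (prod.lift (prod.fst ≫ prod.fst) prod.snd) (prod.fst ≫ prod.snd)
  inv := prod.lift (prod.lift (prod.fst ≫ prod.fst) prod.snd) (prod.fst ≫ prod.snd)

noncomputable def prodReverse {C : Type u} [Category.{v} C] [HasBinaryProducts C] (X Y Z : C) :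
    (X ⨯ Y) ⨯ Z ≅ (Z ⨯ Y) ⨯ X where
  hom := prod.lift (prod.lift prod.snd (prod.fst ≫ prod.snd)) (prod.fst ≫ prod.fst)
  inv := prod.lift (prod.lift prod.snd (prod.fst ≫ prod.snd)) (prod.fst ≫ prod.fst)

namespace EED

variable {C : Type u} [Category.{v} C] [HasBinaryProducts C] (P : EED.{u, v, w} C)

lemma le_map_ex {A B : C} (f : A ⟶ B) (α : P.obj A) : α ≤ P.map f (P.ex f α) :=
  (P.ex_adj f α _).mp le_rfl

lemma ex_comp {A B D : C} (f : A ⟶ B) (g : B ⟶ D) (α : P.obj A) :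
    P.ex (f ≫ g) α = P.ex g (P.ex f α) := by
  refine le_antisymm ((P.ex_adj _ _ _).mpr ?_) ((P.ex_adj _ _ _).mpr ((P.ex_adj _ _ _).mpr ?_))
  · rw [P.map_comp]
    exact (P.le_map_ex f α).trans (P.map_mono f (P.le_map_ex g _))
  · rw [← P.map_comp]
    exact P.le_map_ex _ α

lemma ex_id {A : C} (α : P.obj A) : P.ex (𝟙 A) α = α :=
  le_antisymm ((P.ex_adj _ _ _).mpr (P.map_id A α).ge) ((P.le_map_ex _ α).trans_eq (P.map_id A _))

lemma ex_iso_hom {X Y : C} (e : X ≅ Y) (α : P.obj X) : P.ex e.hom α = P.map e.inv α := by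
  refine le_antisymm ((P.ex_adj _ _ _).mpr ?_) ?_
  · rw [← P.map_comp, e.hom_inv_id, P.map_id]
  · have := P.map_mono e.inv (P.le_map_ex e.hom α)
    rwa [← P.map_comp, e.inv_hom_id, P.map_id] at this

lemma ex_eq_ex_of_iso {X Y Z : C} (e : X ≅ Y) {f : X ⟶ Z} {g : Y ⟶ Z} (hfg : e.hom ≫ g = f)
    {α : P.obj X} {β : P.obj Y} (hαβ : P.map e.hom β = α) : P.ex f α = P.ex g β := by
  rw [← hfg, ← hαβ, P.ex_comp, P.ex_iso_hom, ← P.map_comp, e.inv_hom_id, P.map_id]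

lemma ex_lift_id_snd {X A : C} (α : P.obj (X ⨯ A)) :
    P.ex (prod.lift (𝟙 (X ⨯ A)) prod.snd) α =
      P.map prod.fst α ⊓ P.map (prod.lift (prod.fst ≫ prod.snd) prod.snd) (P.delta A) :=
  le_antisymm ((P.ex_adj _ _ _).mpr ((P.elem_ii α _).mp le_rfl))
    ((P.elem_ii α _).mpr (P.le_map_ex _ α))

lemma delta_le_iff {A : C} (ρ : P.obj (A ⨯ A)) : P.delta A ≤ ρ ↔ ⊤ ≤ P.map (diag A) ρ := by
  rw [← P.elem_i, P.map_top, top_inf_eq]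

lemma map_ex_fst_inf {X X' Y : C} (g : X' ⟶ X) (Φ : P.obj (X ⨯ Y)) (α : P.obj X') :
    P.map g (P.ex prod.fst Φ) ⊓ α =
      P.ex prod.fst (P.map (prod.map g (𝟙 Y)) Φ ⊓ P.map prod.fst α) := by
  rw [← P.beck_chevalley, inf_comm, ← P.frobenius, inf_comm]

lemma inf_map_ex_fst {X X' Y : C} (g : X' ⟶ X) (Φ : P.obj (X ⨯ Y)) (α : P.obj X') :
    α ⊓ P.map g (P.ex prod.fst Φ) =
      P.ex prod.fst (P.map prod.fst α ⊓ P.map (prod.map g (𝟙 Y)) Φ) := by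
  rw [inf_comm, map_ex_fst_inf, inf_comm]

-- Beck–Chevalley is only available along product projections.
lemma comp_eq_ex_fst {A B D : C} (θ : P.obj (A ⨯ B)) (ζ : P.obj (B ⨯ D)) :
    P.comp θ ζ = P.ex prod.fst
      (P.map (prod.lift (prod.fst ≫ prod.fst) prod.snd) θ ⊓
        P.map (prod.lift prod.snd (prod.fst ≫ prod.snd)) ζ) := by
  rw [comp]
  refine P.ex_eq_ex_of_iso (prodRightComm A B D) ?_ ?_
  · ext <;> simp [prodRightComm]
  rw [P.map_inf, ← P.map_comp, ← P.map_comp]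
  congrm P.map ?_ θ ⊓ P.map ?_ ζ <;> ext <;> simp [prodRightComm]

lemma comp_assoc {A B D E : C} (θ : P.obj (A ⨯ B)) (ζ : P.obj (B ⨯ D)) (ξ : P.obj (D ⨯ E)) :
    P.comp (P.comp θ ζ) ξ = P.comp θ (P.comp ζ ξ) := by
  rw [P.comp_eq_ex_fst (P.comp θ ζ), P.comp_eq_ex_fst θ ζ, P.map_ex_fst_inf, ← P.ex_comp,
    P.comp_eq_ex_fst θ (P.comp ζ ξ), P.comp_eq_ex_fst ζ ξ, P.inf_map_ex_fst,
    ← P.ex_comp]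
  refine P.ex_eq_ex_of_iso (prodRightComm _ D B) ?_ ?_
  · ext <;> simp [prodRightComm]
  simp only [P.map_inf, ← P.map_comp, inf_assoc]
  congrm P.map ?_ θ ⊓ (P.map ?_ ζ ⊓ P.map ?_ ξ) <;> ext <;> simp [prodRightComm]

lemma comp_delta {A B : C} (θ : P.obj (A ⨯ B)) : P.comp θ (P.delta B) = θ := by
  rw [comp, ← P.ex_lift_id_snd, ← P.ex_comp,
    show prod.lift (𝟙 _) prod.snd ≫ prod.lift (prod.fst ≫ prod.fst) prod.snd = 𝟙 (A ⨯ B) by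
      ext <;> simp,
    P.ex_id]

lemma op_eq_ex {A B : C} (θ : P.obj (A ⨯ B)) : P.op θ = P.ex (prod.braiding A B).hom θ :=
  (P.ex_iso_hom (prod.braiding A B) θ).symm

lemma op_op {A B : C} (θ : P.obj (A ⨯ B)) : P.op (P.op θ) = θ := by
  rw [op, op, ← P.map_comp, prod.symmetry', P.map_id]

lemma delta_le_op_delta (A : C) : P.delta A ≤ P.op (P.delta A) := by
  rw [P.delta_le_iff, op, ← P.map_comp, show diag A ≫ prod.lift prod.snd prod.fst = diag A by
    ext <;> simp]
  exact (P.delta_le_iff _).mp le_rfl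

lemma op_delta (A : C) : P.op (P.delta A) = P.delta A :=
  le_antisymm ((P.map_mono _ (P.delta_le_op_delta A)).trans_eq (P.op_op _)) (P.delta_le_op_delta A)

lemma op_comp {A B D : C} (θ : P.obj (A ⨯ B)) (ζ : P.obj (B ⨯ D)) :
    P.op (P.comp θ ζ) = P.comp (P.op ζ) (P.op θ) := by
  unfold comp
  rw [P.op_eq_ex, ← P.ex_comp]
  refine P.ex_eq_ex_of_iso (prodReverse A B D) ?_ ?_
  · ext <;> simp [prodReverse, prod.braiding]
  simp only [P.map_inf, op, ← P.map_comp]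
  rw [inf_comm]
  congrm P.map ?_ θ ⊓ P.map ?_ ζ <;> ext <;> simp [prodReverse]

lemma delta_comp {A B : C} (θ : P.obj (A ⨯ B)) : P.comp (P.delta A) θ = θ :=
  calc P.comp (P.delta A) θ = P.op (P.op (P.comp (P.delta A) θ)) := (P.op_op _).symm
    _ = θ := by rw [P.op_comp, P.op_delta, P.comp_delta, P.op_op]

end EED

/-- in the allegory `A_P` of relations of `P`, composition is
associative, `δ_A` is a two-sided unit, and `θ ↦ P_{⟨p₂,p₁⟩}(θ)` is an
involution with `(ψ∘θ)° = θ°∘ψ°`. -/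
theorem allegory_laws
    {C : Type u} [Category.{v} C] [HasBinaryProducts C] (P : EED.{u, v, w} C)
    {A B D E : C} (θ : P.obj (A ⨯ B)) (ζ : P.obj (B ⨯ D)) (ξ : P.obj (D ⨯ E)) :
    P.comp (P.comp θ ζ) ξ = P.comp θ (P.comp ζ ξ) ∧
    P.comp (P.delta A) θ = θ ∧
    P.comp θ (P.delta B) = θ ∧
    P.op (P.op θ) = θ ∧
    P.op (P.comp θ ζ) = P.comp (P.op ζ) (P.op θ) :=
  ⟨P.comp_assoc θ ζ ξ, P.delta_comp θ, P.comp_delta θ, P.op_op θ, P.op_comp θ ζ⟩
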